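/- arXiv:2509.23245 — 4 statements merged into one kernel-verified Lean document; each statement's English description precedes it below -/
import Mathlib

section
/- Let q be a prime power, let a ∈ F_{q^n} be q^n/q-normal, and let d be a divisor of n. Then the relative trace Tr_{q^n/q^d}(a) = Σ_{i=0}^{n/d−1} a^{q^{di}} is q^d/q-normal as an element of F_{q^d}; in particular, Tr_{q^n/q^d}(a) ≠ 0. -/
/-!
Write `σ x = x ^ q` and `t = ∑_{k < n/d} σ^{dk} a`. If `σ^d x = x` and `x = ∑_i b_i σ^i a` is the
expansion of `x` in the normal basis of `a`, applying `σ^d` shifts the coordinates `b` by `d`, so by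
uniqueness `b` is `d`-periodic; grouping the indices by their residue mod `d` gives
`x = ∑_{j < d} b_j σ^j t`. Conversely an expansion `x = ∑_j c_j σ^j t` unfolds to the expansion of
`x` in the basis `σ^i a` with coordinates `c_{i mod d}`, so uniqueness passes from `a` to `t`.
Finally `t ≠ 0`, since `1` is a combination of the conjugates of a normal element.
-/

open scoped BigOperators

/-- In an ambient finite field `E` (of order `q^N` for some multiple `N` of `m`), the element
`a` — assumed to lie in the subfield `F_{q^m} = {x | x ^ q ^ m = x}` — is `q^m/q^d`-normal:
the conjugates `a ^ q ^ (d*i)`, `i = 0, …, m/d − 1`, form a basis of `F_{q^m}` as a vector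
space over `F_{q^d} = {x | x ^ q ^ d = x}`, encoded by the unique representation of every
element of `F_{q^m}` as a linear combination of the conjugates with coefficients in `F_{q^d}`. -/
def IsNormalElemIn (q d m : ℕ) {E : Type*} [Field E] (a : E) : Prop :=
  ∀ x : E, x ^ q ^ m = x →
    ∃! c : Fin (m / d) → E,
      (∀ i, c i ^ q ^ d = c i) ∧ x = ∑ i, c i * a ^ q ^ (d * (i : ℕ))

open Finset Function Fin.NatCast

section Monoid

variable {M : Type*} [Monoid M] {q : ℕ} {x : M}

theorem pow_pow_eq_self (hx : x ^ q = x) (k : ℕ) : x ^ q ^ k = x := by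
  simpa [IsFixedPt, pow_iterate] using (show IsFixedPt (· ^ q) x from hx).iterate k

theorem pow_pow_mod {N : ℕ} (hx : x ^ q ^ N = x) (k : ℕ) : x ^ q ^ (k % N) = x ^ q ^ k := by
  have hper : IsPeriodicPt (· ^ q) N x := by simpa [IsPeriodicPt, IsFixedPt, pow_iterate]
  simpa [pow_iterate] using hper.iterate_mod_apply k

end Monoid

theorem sum_fin_mul_eq_sum_sum {M : Type*} [AddCommMonoid M] (d m : ℕ) (f : ℕ → M) :
    ∑ i : Fin (d * m), f i = ∑ j : Fin d, ∑ k : Fin m, f (d * k + j) := by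
  rw [← (finProdFinEquiv.trans (finCongr (Nat.mul_comm m d))).sum_comp, Fintype.sum_prod_type,
    Finset.sum_comm]
  simp [add_comm]

theorem Function.Periodic.apply_fin_eq_apply_mod {α : Type*} {N d : ℕ} [NeZero N] {f : Fin N → α}
    (hf : Periodic f (d : Fin N)) (i : Fin N) : f i = f ((i % d : ℕ) : Fin N) := by
  have hcast : ((((i : ℕ) / d) • d : ℕ) : Fin N) = ((i : ℕ) / d) • (d : Fin N) :=
    map_nsmul (Nat.castAddMonoidHom (Fin N)) _ _
  conv_lhs => rw [← Fin.cast_val_eq_self i, ← Nat.mod_add_div' i d, ← smul_eq_mul, Nat.cast_add,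
    hcast]
  exact hf.nsmul _ _

section RelTrace

variable {E : Type*} [Field E]

theorem isNormalElemIn_one_iff {q N : ℕ} {a : E} :
    IsNormalElemIn q 1 N a ↔ ∀ x : E, x ^ q ^ N = x →
      ∃! c : Fin N → E, (∀ i, c i ^ q = c i) ∧ x = ∑ i, c i * a ^ q ^ (i : ℕ) := by
  rw [IsNormalElemIn, Nat.div_one]
  simp only [pow_one, one_mul]

theorem IsNormalElemIn.ne_zero {q d m : ℕ} {a : E} (ha : IsNormalElemIn q d m a) (hq : q ≠ 0) :
    a ≠ 0 := by
  rintro rfl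
  obtain ⟨c, ⟨-, h⟩, -⟩ := ha 1 (one_pow _)
  simp [zero_pow (pow_ne_zero _ hq)] at h

theorem sum_pow_pow_pow {p s : ℕ} [ExpChar E p] {ι : Type*} (u : Finset ι) (f : ι → E) (k : ℕ) :
    (∑ i ∈ u, f i) ^ (p ^ s) ^ k = ∑ i ∈ u, f i ^ (p ^ s) ^ k := by
  simp only [← pow_mul, sum_pow_char_pow]

def relTrace (q d m : ℕ) (a : E) : E := ∑ k : Fin m, a ^ q ^ (d * (k : ℕ))

variable {p s : ℕ} [ExpChar E p] {d m : ℕ} {a : E}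

theorem relTrace_pow_pow (j : ℕ) :
    relTrace (p ^ s) d m a ^ (p ^ s) ^ j = ∑ k : Fin m, a ^ (p ^ s) ^ (d * (k : ℕ) + j) := by
  simp only [relTrace, ← pow_mul, sum_pow_char_pow, pow_add]

theorem relTrace_pow_pow_self (ha : a ^ (p ^ s) ^ (d * m) = a) :
    relTrace (p ^ s) d m a ^ (p ^ s) ^ d = relTrace (p ^ s) d m a := by
  set g : ℕ → E := fun k ↦ a ^ (p ^ s) ^ (d * k)
  have hshift := (sum_range_succ' g m).symm.trans (sum_range_succ g m)
  rw [show g m = g 0 by simpa [g] using ha] at hshift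
  calc relTrace (p ^ s) d m a ^ (p ^ s) ^ d = ∑ k : Fin m, g (k + 1) := by
        simp only [relTrace_pow_pow, g, mul_add, mul_one]
    _ = ∑ k : Fin m, g k := by
        simpa only [Fin.sum_univ_eq_sum_range (fun k ↦ g (k + 1)), Fin.sum_univ_eq_sum_range g]
          using add_right_cancel hshift

theorem sum_mul_pow_pow_eq_sum_mul_relTrace [NeZero d] (c : Fin d → E) :
    ∑ i : Fin (d * m), c ((i : ℕ) : Fin d) * a ^ (p ^ s) ^ (i : ℕ) =
      ∑ j : Fin d, c j * relTrace (p ^ s) d m a ^ (p ^ s) ^ (j : ℕ) := by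
  rw [sum_fin_mul_eq_sum_sum d m (fun i ↦ c (i : Fin d) * a ^ (p ^ s) ^ i)]
  simp only [relTrace_pow_pow, mul_sum]
  refine sum_congr rfl fun j _ ↦ sum_congr rfl fun k _ ↦ ?_
  congr 2
  ext
  rw [Fin.val_natCast, Nat.mul_add_mod, Nat.mod_eq_of_lt j.isLt]

theorem periodic_coeffs_of_pow_pow_eq_self {N : ℕ} [NeZero N] {x : E} {b : Fin N → E}
    (ha : a ^ (p ^ s) ^ N = a) (hx : x ^ (p ^ s) ^ d = x)
    (hb : (∀ i, b i ^ p ^ s = b i) ∧ x = ∑ i, b i * a ^ (p ^ s) ^ (i : ℕ))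
    (hb_unique : ∀ c : Fin N → E,
      (∀ i, c i ^ p ^ s = c i) ∧ x = ∑ i, c i * a ^ (p ^ s) ^ (i : ℕ) → c = b) :
    Periodic b (d : Fin N) := by
  obtain ⟨hb_fix, hbx⟩ := hb
  have hshift : (fun i ↦ b (i - d)) = b := by
    refine hb_unique _ ⟨fun i ↦ hb_fix _, ?_⟩
    calc x = x ^ (p ^ s) ^ d := hx.symm
      _ = ∑ i, b i * a ^ (p ^ s) ^ ((i : ℕ) + d) := by
        rw [hbx, sum_pow_pow_pow]
        refine sum_congr rfl fun i _ ↦ ?_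
        rw [mul_pow, pow_pow_eq_self (hb_fix i), ← pow_mul a, ← pow_add]
      _ = ∑ i, b (i - d) * a ^ (p ^ s) ^ (i : ℕ) := by
        refine Fintype.sum_equiv (Equiv.addRight (d : Fin N)) _ _ fun i ↦ ?_
        rw [Equiv.coe_addRight, add_sub_cancel_right, Fin.val_add, Fin.val_natCast,
          Nat.add_mod_mod, pow_pow_mod ha]
  intro i
  simpa using (congrFun hshift (i + d)).symm

theorem isNormalElemIn_relTrace [NeZero d] [NeZero m] (ha_fix : a ^ (p ^ s) ^ (d * m) = a)
    (ha : IsNormalElemIn (p ^ s) 1 (d * m) a) :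
    IsNormalElemIn (p ^ s) 1 d (relTrace (p ^ s) d m a) := by
  rw [isNormalElemIn_one_iff] at ha ⊢
  intro x hx
  obtain ⟨b, hb, hb_unique⟩ :=
    ha x (by rw [← pow_pow_mod hx, Nat.mul_mod_right, pow_zero, pow_one])
  have hb_periodic := periodic_coeffs_of_pow_pow_eq_self ha_fix hx hb hb_unique
  refine ⟨fun j ↦ b (j : ℕ), ⟨fun j ↦ hb.1 _, ?_⟩, fun c hc ↦ funext fun j ↦ ?_⟩
  · rw [← sum_mul_pow_pow_eq_sum_mul_relTrace]
    conv_lhs => rw [hb.2]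
    refine sum_congr rfl fun i _ ↦ ?_
    rw [hb_periodic.apply_fin_eq_apply_mod i, Fin.val_natCast]
  · have hbc := hb_unique (fun i ↦ c ((i : ℕ) : Fin d))
      ⟨fun i ↦ hc.1 _, by rw [sum_mul_pow_pow_eq_sum_mul_relTrace]; exact hc.2⟩
    have hjN : (j : ℕ) < d * m := j.isLt.trans_le (Nat.le_mul_of_pos_right d (NeZero.pos m))
    simpa [Fin.val_natCast, Nat.mod_eq_of_lt hjN] using congrFun hbc ((j : ℕ) : Fin (d * m))

end RelTrace

/-- Lemma 4.4: Let `q` be a prime power, `a ∈ F_{q^n}` be `q^n/q`-normal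
and `d ∣ n`.  Then `Tr_{q^n/q^d}(a) = ∑_{i<n/d} a^{q^{d i}}` lies in `F_{q^d}` and is
`q^d/q`-normal; in particular it is nonzero. -/
theorem stmt7 (q n d : ℕ) (hq : IsPrimePow q) (hn : 0 < n) (hd : d ∣ n)
    (E : Type) [Field E] [Fintype E] (hE : Fintype.card E = q ^ n)
    (a : E) (ha : IsNormalElemIn q 1 n a) :
    (∑ i : Fin (n / d), a ^ q ^ (d * (i : ℕ))) ^ q ^ d
        = ∑ i : Fin (n / d), a ^ q ^ (d * (i : ℕ)) ∧
      IsNormalElemIn q 1 d (∑ i : Fin (n / d), a ^ q ^ (d * (i : ℕ))) ∧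
      ∑ i : Fin (n / d), a ^ q ^ (d * (i : ℕ)) ≠ 0 := by
  obtain ⟨m, rfl⟩ := hd
  obtain ⟨p, s, hp, -, rfl⟩ := hq
  have : Fact p.Prime := ⟨hp.nat_prime⟩
  have : CharP E p := charP_of_card_eq_prime_pow (hE.trans (pow_mul p s (d * m)).symm)
  have : NeZero d := ⟨left_ne_zero_of_mul hn.ne'⟩
  have : NeZero m := ⟨right_ne_zero_of_mul hn.ne'⟩
  have ha_fix : a ^ (p ^ s) ^ (d * m) = a := hE ▸ FiniteField.pow_card a
  have h_normal := isNormalElemIn_relTrace ha_fix ha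
  rw [Nat.mul_div_cancel_left m (NeZero.pos d)]
  exact ⟨relTrace_pow_pow_self ha_fix, h_normal, h_normal.ne_zero (pow_ne_zero s hp.ne_zero)⟩
end

section
/- Let q be a prime power and let n₁, n₂ be relatively prime positive integers. If a ∈ F_{q^{n₁}} is q^{n₁}/q-normal, then, regarded as an element of F_{q^{n₁n₂}}, a is q^{n₁n₂}/q^{n₂}-normal, i.e., the conjugates a, a^{q^{n₂}}, a^{q^{2n₂}}, …, a^{q^{(n₁−1)n₂}} form a basis of F_{q^{n₁n₂}} as an F_{q^{n₂}}-vector space. -/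
/-!
Let `K = F_{q^{n₂}}` and `L = F_{q^{n₁}}` inside `E = F_{q^{n₁n₂}}`, and let `W` be the `K`-span of
the conjugates `a^{q^{n₂ i}}`, `i < n₁`. Since `n₂` is invertible modulo `n₁`, these are all the
conjugates `a^{q^j}`, so `W` contains `L` (by normality of `a` over `F_q ⊆ K`) and is therefore
stable under multiplication by `L`. Counting, `|W| = q^{n₂ dim_K W} = q^{n₁ dim_L W}`, so
`n₁ ∣ dim_K W ≤ [E : K] = n₁`, whence `W = E` and the `n₁` conjugates form a `K`-basis.
-/

open scoped BigOperators

open Module Polynomial Submodule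

theorem pow_pow_eq_pow_pow_mod {M : Type*} [Monoid M] {a : M} {q n : ℕ} (h : a ^ q ^ n = a)
    (m : ℕ) : a ^ q ^ m = a ^ q ^ (m % n) := by
  have hper : Function.IsPeriodicPt (· ^ q) n a := by
    rw [Function.IsPeriodicPt, Function.IsFixedPt, pow_iterate]
    exact h
  have := hper.iterate_mod_apply m
  rwa [pow_iterate, pow_iterate, eq_comm] at this

theorem Nat.exists_lt_mul_mod_eq_mod {n₁ n₂ : ℕ} (hcop : n₁.Coprime n₂) (h₁ : 0 < n₁) (j : ℕ) :
    ∃ i < n₁, n₂ * i % n₁ = j % n₁ := by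
  have : NeZero n₁ := ⟨h₁.ne'⟩
  refine ⟨((n₂ : ZMod n₁)⁻¹ * j).val, ZMod.val_lt _, ?_⟩
  rw [← ZMod.natCast_eq_natCast_iff', Nat.cast_mul, ZMod.natCast_zmod_val, ← mul_assoc,
    ZMod.coe_mul_inv_eq_one _ hcop.symm, one_mul]

theorem finrank_eq_of_natCard_eq_pow {K V : Type*} [DivisionRing K] [AddCommGroup V] [Module K V]
    [Finite K] [Finite V] {n : ℕ} (h : Nat.card V = Nat.card K ^ n) : finrank K V = n := by
  rw [natCard_eq_pow_finrank (K := K)] at h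
  exact Nat.pow_right_injective Finite.one_lt_card h

def frobeniusFixedField (E : Type*) [Field E] (p m : ℕ) [ExpChar E p] : Subfield E :=
  (iterateFrobenius E p m).eqLocusField (RingHom.id E)

variable {E : Type*} [Field E]

@[simp]
theorem mem_frobeniusFixedField {p m : ℕ} [ExpChar E p] {x : E} :
    x ∈ frobeniusFixedField E p m ↔ x ^ p ^ m = x := by
  rw [frobeniusFixedField, RingHom.mem_eqLocusField, iterateFrobenius_def, RingHom.id_apply]

theorem natCard_frobeniusFixedField [Finite E] {p : ℕ} [Fact p.Prime] [CharP E p] {m N : ℕ}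
    (hE : Nat.card E = p ^ N) (hm : m ∣ N) (hm0 : m ≠ 0) :
    Nat.card (frobeniusFixedField E p m) = p ^ m := by
  set P : E[X] := X ^ p ^ m - X
  have hP : P ≠ 0 := FiniteField.X_pow_card_pow_sub_X_ne_zero E hm0 (Fact.out : p.Prime).one_lt
  have hsplits : P.Splits := by
    refine Splits.of_dvd splits_X_pow_nat_card_sub_X
      (FiniteField.X_pow_card_sub_X_ne_zero E Finite.one_lt_card) ?_
    rw [hE]
    exact dvd_pow_pow_sub_self_of_dvd hm
  have hroots : (P.rootSet E : Set E) = frobeniusFixedField E p m := by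
    ext x
    simp [P, mem_rootSet, hP, sub_eq_zero]
  rw [← SetLike.coe_sort_coe, ← hroots, Nat.card_eq_fintype_card, card_rootSet_eq_natDegree
      (galois_poly_separable p _ (dvd_pow_self p hm0)) (by simpa using hsplits),
    FiniteField.X_pow_card_pow_sub_X_natDegree_eq E hm0 (Fact.out : p.Prime).one_lt]

theorem Submodule.eq_top_of_mul_mem [Finite E] {K L : Subfield E} {q n₁ n₂ : ℕ} (hq : 1 < q)
    (hcop : n₁.Coprime n₂) (hK : Nat.card K = q ^ n₂) (hL : Nat.card L = q ^ n₁)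
    (hrank : finrank K E = n₁) {W : Submodule K E} (hW : W ≠ ⊥)
    (hmul : ∀ l ∈ L, ∀ w ∈ W, l * w ∈ W) : W = ⊤ := by
  let W' : Submodule L E := { W.toAddSubmonoid with smul_mem' := fun c x hx => hmul c c.2 x hx }
  have hcard : q ^ (n₂ * finrank K W) = q ^ (n₁ * finrank L W') := by
    rw [pow_mul, pow_mul, ← hK, ← hL, ← natCard_eq_pow_finrank, ← natCard_eq_pow_finrank]
    rfl
  have hdvd : n₁ ∣ finrank K W :=
    hcop.dvd_of_dvd_mul_left ⟨_, Nat.pow_right_injective hq hcard⟩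
  have hpos : 0 < finrank K W := Nat.pos_of_ne_zero (finrank_eq_zero.not.mpr hW)
  exact eq_top_of_finrank_eq <|
    le_antisymm (finrank_le W) (hrank ▸ Nat.le_of_dvd hpos hdvd)

theorem Submodule.mul_mem_span_of_subset {K L : Subfield E} {S : Set E} (hSL : S ⊆ L)
    (hLS : (L : Set E) ⊆ span K S) {l : E} (hl : l ∈ L) {w : E} (hw : w ∈ span K S) :
    l * w ∈ span K S := by
  induction hw using span_induction with
  | mem s hs => exact hLS (L.mul_mem hl (hSL hs))
  | zero => simp
  | add x y _ _ hx hy => simpa [mul_add] using add_mem hx hy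
  | smul c x _ hx => simpa [mul_smul_comm] using smul_mem _ c hx

theorem Module.Basis.existsUnique_sum_mul {K : Subfield E} {ι : Type*} [Fintype ι]
    (b : Basis ι K E) (x : E) : ∃! c : ι → E, (∀ i, c i ∈ K) ∧ x = ∑ i, c i * b i := by
  refine ⟨fun i => b.repr x i, ⟨fun i => (b.repr x i).2, ?_⟩, ?_⟩
  · conv_lhs => rw [← b.sum_repr x]
    rfl
  · rintro c ⟨hcK, rfl⟩
    have := b.repr_sum_self fun i => ⟨c i, hcK i⟩
    funext i
    exact (congrArg Subtype.val (congrFun this i)).symm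

section Conjugates

variable {a : E} {q n₁ n₂ : ℕ}

theorem pow_pow_mem_span_conjugates {R : Type*} [Semiring R] [Module R E]
    (haF : a ^ q ^ n₁ = a) (hcop : n₁.Coprime n₂) (h₁ : 0 < n₁) (j : ℕ) :
    a ^ q ^ j ∈ span R (Set.range fun i : Fin n₁ => a ^ q ^ (n₂ * i)) := by
  obtain ⟨i, hi, hij⟩ := Nat.exists_lt_mul_mod_eq_mod hcop h₁ j
  refine subset_span ⟨⟨i, hi⟩, ?_⟩
  dsimp only
  rw [pow_pow_eq_pow_pow_mod haF, hij, ← pow_pow_eq_pow_pow_mod haF]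

theorem mem_span_conjugates_of_isNormalElemIn {K : Subfield E} (hK : ∀ c : E, c ^ q = c → c ∈ K)
    (haF : a ^ q ^ n₁ = a) (hcop : n₁.Coprime n₂) (h₁ : 0 < n₁) (ha : IsNormalElemIn q 1 n₁ a)
    {x : E} (hx : x ^ q ^ n₁ = x) :
    x ∈ span K (Set.range fun i : Fin n₁ => a ^ q ^ (n₂ * i)) := by
  obtain ⟨c, ⟨hc, rfl⟩, -⟩ := ha x hx
  refine sum_mem fun i _ => ?_
  exact smul_mem _ (⟨c i, hK _ (by simpa using hc i)⟩ : K)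
    (pow_pow_mem_span_conjugates haF hcop h₁ _)

theorem span_conjugates_eq_top [Finite E] {K L : Subfield E} (hq : 1 < q) (hcop : n₁.Coprime n₂)
    (h₁ : 0 < n₁) (hK : Nat.card K = q ^ n₂) (hL : Nat.card L = q ^ n₁) (hrank : finrank K E = n₁)
    (hmemK : ∀ x, x ∈ K ↔ x ^ q ^ n₂ = x) (hmemL : ∀ x, x ∈ L ↔ x ^ q ^ n₁ = x)
    (haF : a ^ q ^ n₁ = a) (ha : IsNormalElemIn q 1 n₁ a) :
    span K (Set.range fun i : Fin n₁ => a ^ q ^ (n₂ * i)) = ⊤ := by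
  have hFqK (c : E) (hc : c ^ q = c) : c ∈ K := (hmemK c).mpr <| by
    simpa [Nat.mod_one] using pow_pow_eq_pow_pow_mod (n := 1) (by simpa) n₂
  have hLW : (L : Set E) ⊆ span K (Set.range fun i : Fin n₁ => a ^ q ^ (n₂ * i)) := fun x hx =>
    mem_span_conjugates_of_isNormalElemIn hFqK haF hcop h₁ ha ((hmemL x).mp hx)
  have hvL : (Set.range fun i : Fin n₁ => a ^ q ^ (n₂ * i)) ⊆ L := by
    rintro _ ⟨i, rfl⟩
    rw [SetLike.mem_coe, hmemL, pow_right_comm, haF]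
  refine eq_top_of_mul_mem hq hcop hK hL hrank ?_
    fun l hl w hw => mul_mem_span_of_subset hvL hLW hl hw
  exact (Submodule.ne_bot_iff _).mpr ⟨1, hLW L.one_mem, one_ne_zero⟩

end Conjugates

/-- Lemma 4.2: Let `q` be a prime power and `n₁, n₂` relatively prime.
If `a ∈ F_{q^{n₁}}` is `q^{n₁}/q`-normal, then, regarded as an element of `F_{q^{n₁n₂}}`,
`a` is `q^{n₁n₂}/q^{n₂}`-normal: the conjugates `a, a^{q^{n₂}}, …, a^{q^{(n₁−1)n₂}}` form
a basis of `F_{q^{n₁n₂}}` over `F_{q^{n₂}}`. -/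
theorem stmt8 (q n₁ n₂ : ℕ) (hq : IsPrimePow q) (h₁ : 0 < n₁) (h₂ : 0 < n₂)
    (hcop : Nat.Coprime n₁ n₂)
    (E : Type) [Field E] [Fintype E] (hE : Fintype.card E = q ^ (n₁ * n₂))
    (a : E) (haF : a ^ q ^ n₁ = a) (ha : IsNormalElemIn q 1 n₁ a) :
    IsNormalElemIn q n₂ (n₁ * n₂) a := by
  obtain ⟨p, k, hp, hk, rfl⟩ := hq
  have : Fact p.Prime := ⟨hp.nat_prime⟩
  have hE' : Nat.card E = p ^ (k * (n₁ * n₂)) := by rw [Nat.card_eq_fintype_card, hE, ← pow_mul]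
  have : CharP E p := charP_of_card_eq_prime_pow (hE.trans (pow_mul ..).symm)
  have hmem (d : ℕ) (x : E) : x ∈ frobeniusFixedField E p (k * d) ↔ x ^ (p ^ k) ^ d = x := by
    rw [mem_frobeniusFixedField, pow_mul]
  have hcard (d : ℕ) (hd : d ∣ n₁ * n₂) (hd0 : d ≠ 0) :
      Nat.card (frobeniusFixedField E p (k * d)) = (p ^ k) ^ d := by
    rw [← pow_mul]
    exact natCard_frobeniusFixedField hE' (mul_dvd_mul_left k hd) (by positivity)
  have hK := hcard n₂ (dvd_mul_left n₂ n₁) h₂.ne'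
  have hrank : finrank (frobeniusFixedField E p (k * n₂)) E = n₁ :=
    finrank_eq_of_natCard_eq_pow (by rw [hE', hK, ← pow_mul, ← pow_mul, mul_comm n₁ n₂])
  have htop := span_conjugates_eq_top (one_lt_pow₀ hp.nat_prime.one_lt hk.ne') hcop h₁ hK
    (hcard n₁ (dvd_mul_right n₁ n₂) h₁.ne') hrank (hmem n₂) (hmem n₁) haF ha
  let b := basisOfTopLeSpanOfCardEqFinrank _ htop.ge (by simp [hrank])
  intro x _
  rw [Nat.mul_div_cancel n₁ h₂]
  simpa only [hmem, b, coe_basisOfTopLeSpanOfCardEqFinrank] using b.existsUnique_sum_mul x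
end

section
/- Let q be a prime power and n a positive integer. Then W(x^n − 1) ≤ 2^{(n + gcd(n, q−1))/2}, where W(x^n − 1) is the number of squarefree monic divisors of x^n − 1 in F_q[x]. In particular, W(x^n − 1) ≤ 2^n, with equality if and only if n divides q − 1; furthermore, if n does not divide q − 1, then W(x^n − 1) ≤ 2^{3n/4}. -/
/-- `W(f)`: the number of squarefree monic divisors of a polynomial `f`. -/
noncomputable def Wpoly {F : Type*} [Field F] (f : Polynomial F) : ℕ :=
  {g : Polynomial F | g.Monic ∧ Squarefree g ∧ g ∣ f}.ncard

/-!
A squarefree monic divisor of `f` is the product of a subset of the monic irreducible factors of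
`f`, so `W(f) = 2^ω` with `ω` the number of distinct such factors. Every factor has degree at
least one, and the factors of degree one are the `X - a` with `a` a root of `f`, hence
`2ω ≤ deg f + #roots` and `#roots ≤ ω`. For `f = Xⁿ - 1` over `𝔽_q` the roots form the
`n`-torsion of the cyclic group `𝔽_q^×`, of order `gcd(n, q - 1)`.
-/

open Polynomial UniqueFactorizationMonoid Finset

theorem Nat.two_mul_le_of_dvd_of_ne {a b : ℕ} (hb : 0 < b) (h : a ∣ b) (hne : a ≠ b) :
    2 * a ≤ b := by
  obtain ⟨c, rfl⟩ := h
  rcases c with _ | _ | c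
  · omega
  · simp at hne
  · nlinarith

section UniqueFactorizationMonoid

variable {α : Type*} [CommMonoidWithZero α] [StrongNormalizationMonoid α]
  [UniqueFactorizationMonoid α]

theorem normalizedFactors_prod_of_subset_primeFactors {f : α} {s : Finset α}
    (hs : s ⊆ primeFactors f) : normalizedFactors (s.prod id) = s.val := by
  have hmem : ∀ p ∈ s, p ∈ normalizedFactors f := fun p hp => mem_primeFactors.mp (hs hp)
  have h0 : (0 : α) ∉ s.val := fun h0 => (prime_of_normalized_factor 0 (hmem 0 h0)).ne_zero rfl
  rw [← Finset.prod_val, normalizedFactors_multiset_prod _ h0]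
  conv_rhs => rw [← Multiset.sum_map_singleton s.val]
  refine congrArg Multiset.sum (Multiset.map_congr rfl fun p hp => ?_)
  rw [normalizedFactors_irreducible (irreducible_of_normalized_factor p (hmem p hp)),
    normalize_normalized_factor p (hmem p hp)]

theorem radical_eq_normalize_of_squarefree {g : α} (hg : Squarefree g) :
    radical g = normalize g := by
  nontriviality α
  rw [radical, ← Finset.prod_val, primeFactors_val_eq_normalizedFactors hg.isRadical,
    prod_normalizedFactors_eq hg.ne_zero]

theorem ncard_setOf_squarefree_normalized_dvd {f : α} (hf : f ≠ 0) :
    {g | normalize g = g ∧ Squarefree g ∧ g ∣ f}.ncard = 2 ^ #(primeFactors f) := by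
  have : Nontrivial α := nontrivial_of_ne f 0 hf
  have hinj : Set.InjOn (fun s : Finset α => s.prod id) ↑(primeFactors f).powerset := by
    intro s hs t ht hst
    rw [Finset.mem_coe, Finset.mem_powerset] at hs ht
    exact Finset.val_injective <| by
      rw [← normalizedFactors_prod_of_subset_primeFactors hs,
        ← normalizedFactors_prod_of_subset_primeFactors ht]
      exact congrArg normalizedFactors hst
  have himage : {g | normalize g = g ∧ Squarefree g ∧ g ∣ f} =
      (fun s : Finset α => s.prod id) '' ↑(primeFactors f).powerset := by
    ext g
    constructor
    · rintro ⟨hnorm, hsq, hdvd⟩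
      refine ⟨primeFactors g, ?_, (radical_eq_normalize_of_squarefree hsq).trans hnorm⟩
      rw [Finset.mem_coe, Finset.mem_powerset]
      intro p hp
      rw [mem_primeFactors] at hp ⊢
      exact Multiset.subset_of_le
        ((dvd_iff_normalizedFactors_le_normalizedFactors hsq.ne_zero hf).mp hdvd) hp
    · rintro ⟨s, hs, rfl⟩
      rw [Finset.mem_coe, Finset.mem_powerset] at hs
      have hnf := normalizedFactors_prod_of_subset_primeFactors hs
      have h0 : s.prod id ≠ 0 := Finset.prod_ne_zero_iff.mpr fun p hp =>
        (prime_of_normalized_factor p (mem_primeFactors.mp (hs hp))).ne_zero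
      refine ⟨?_, ?_, ?_⟩
      · rw [← prod_normalizedFactors_eq h0, hnf, Finset.prod_val]
      · rw [squarefree_iff_nodup_normalizedFactors h0, hnf]
        exact s.nodup
      · rw [dvd_iff_normalizedFactors_le_normalizedFactors h0 hf, hnf,
          Multiset.le_iff_subset s.nodup]
        exact fun p hp => mem_primeFactors.mp (hs hp)
  rw [himage, hinj.ncard_image, Set.ncard_coe_finset, Finset.card_powerset]

end UniqueFactorizationMonoid

section Polynomial

variable {K : Type*} [Field K] [DecidableEq K]

theorem Wpoly_eq_two_pow_card_primeFactors {f : K[X]} (hf : f ≠ 0) :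
    Wpoly f = 2 ^ #(primeFactors f) := by
  rw [Wpoly, ← ncard_setOf_squarefree_normalized_dvd hf]
  congr 1
  ext g
  exact and_congr_left fun h => (normalize_eq_self_iff_monic h.1.ne_zero).symm

theorem sum_natDegree_primeFactors_le {f : K[X]} (hf : f ≠ 0) :
    ∑ p ∈ primeFactors f, p.natDegree ≤ f.natDegree := by
  have hne : ∀ p ∈ primeFactors f, id p ≠ 0 := fun p hp =>
    (prime_of_normalized_factor p (mem_primeFactors.mp hp)).ne_zero
  have := natDegree_le_of_dvd radical_dvd_self hf
  rwa [radical, natDegree_prod _ _ hne] at this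

theorem card_filter_primeFactors_natDegree_eq_one {f : K[X]} (hf : f ≠ 0) :
    #{p ∈ primeFactors f | p.natDegree = 1} = #f.roots.toFinset := by
  symm
  refine Finset.card_bij (fun r _ => X - C r) (fun r hr => ?_)
    (fun r _ s _ h => C_injective (sub_right_injective h)) (fun p hp => ?_)
  · rw [Multiset.mem_toFinset, mem_roots hf] at hr
    rw [Finset.mem_filter, mem_primeFactors, mem_normalizedFactors_iff' hf]
    exact ⟨⟨irreducible_X_sub_C r, (monic_X_sub_C r).normalize_eq_self, dvd_iff_isRoot.mpr hr⟩,
      natDegree_X_sub_C r⟩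
  · rw [Finset.mem_filter, mem_primeFactors, mem_normalizedFactors_iff' hf] at hp
    obtain ⟨⟨-, hnorm, hdvd⟩, hdeg⟩ := hp
    have hp0 : p ≠ 0 := fun h => by simp [h] at hdeg
    have hlin : p = X - C (-p.coeff 0) := by
      rw [map_neg, sub_neg_eq_add]
      exact ((normalize_eq_self_iff_monic hp0).mp hnorm).eq_X_add_C hdeg
    refine ⟨-p.coeff 0, ?_, hlin.symm⟩
    rw [Multiset.mem_toFinset, mem_roots hf, ← dvd_iff_isRoot, ← hlin]
    exact hdvd

theorem card_roots_toFinset_le_card_primeFactors {f : K[X]} (hf : f ≠ 0) :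
    #f.roots.toFinset ≤ #(primeFactors f) :=
  card_filter_primeFactors_natDegree_eq_one hf ▸ Finset.card_filter_le _ _

theorem two_mul_card_primeFactors_le {f : K[X]} (hf : f ≠ 0) :
    2 * #(primeFactors f) ≤ f.natDegree + #f.roots.toFinset := by
  rw [← card_filter_primeFactors_natDegree_eq_one hf, Finset.card_filter]
  calc 2 * #(primeFactors f) = ∑ p ∈ primeFactors f, 2 := by rw [sum_const, smul_eq_mul, mul_comm]
    _ ≤ ∑ p ∈ primeFactors f, (p.natDegree + if p.natDegree = 1 then 1 else 0) := by
      refine Finset.sum_le_sum fun p hp => ?_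
      have := (irreducible_of_normalized_factor p (mem_primeFactors.mp hp)).natDegree_pos
      split_ifs <;> omega
    _ ≤ f.natDegree + ∑ p ∈ primeFactors f, if p.natDegree = 1 then 1 else 0 := by
      rw [Finset.sum_add_distrib]
      gcongr
      exact sum_natDegree_primeFactors_le hf

theorem card_roots_toFinset_X_pow_sub_one [Fintype K] {n : ℕ} (hn : n ≠ 0) :
    #(X ^ n - 1 : K[X]).roots.toFinset = n.gcd (Fintype.card K - 1) := by
  have : NeZero n := ⟨hn⟩
  calc #(X ^ n - 1 : K[X]).roots.toFinset = Nat.card (rootsOfUnity n K) := by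
        rw [Nat.card_congr (rootsOfUnityEquivNthRoots K n), ← Nat.card_eq_finsetCard]
        refine Nat.card_congr (Equiv.subtypeEquivRight fun x => ?_)
        rw [Multiset.mem_toFinset, nthRoots, map_one]
    _ = (Nat.card Kˣ).gcd n := IsCyclic.card_powMonoidHom_ker Kˣ n
    _ = n.gcd (Fintype.card K - 1) := by
        rw [Nat.card_eq_fintype_card, Fintype.card_units, Nat.gcd_comm]

end Polynomial

theorem stmt12_general (q n : ℕ) (hn : 0 < n)
    (F : Type) [Field F] [Fintype F] (hF : Fintype.card F = q) :
    (Wpoly ((Polynomial.X : Polynomial F) ^ n - 1) : ℝ)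
        ≤ 2 ^ (((n : ℝ) + (Nat.gcd n (q - 1) : ℝ)) / 2) ∧
      Wpoly ((Polynomial.X : Polynomial F) ^ n - 1) ≤ 2 ^ n ∧
      (Wpoly ((Polynomial.X : Polynomial F) ^ n - 1) = 2 ^ n ↔ n ∣ q - 1) ∧
      (¬ n ∣ q - 1 →
        (Wpoly ((Polynomial.X : Polynomial F) ^ n - 1) : ℝ) ≤ 2 ^ (3 * (n : ℝ) / 4)) := by
  classical
  have hfC : (X ^ n - 1 : F[X]) = X ^ n - C 1 := by rw [map_one]
  have hf0 : (X ^ n - 1 : F[X]) ≠ 0 := hfC ▸ X_pow_sub_C_ne_zero hn 1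
  have hdeg : (X ^ n - 1 : F[X]).natDegree = n := hfC ▸ natDegree_X_pow_sub_C
  set ω := #(primeFactors (X ^ n - 1 : F[X]))
  set r := n.gcd (q - 1)
  have hroots : #(X ^ n - 1 : F[X]).roots.toFinset = r := by
    rw [card_roots_toFinset_X_pow_sub_one hn.ne', hF]
  have hupper : 2 * ω ≤ n + r := hdeg ▸ hroots ▸ two_mul_card_primeFactors_le hf0
  have hlower : r ≤ ω := hroots ▸ card_roots_toFinset_le_card_primeFactors hf0
  have hrn : r ≤ n := Nat.le_of_dvd hn (Nat.gcd_dvd_left n (q - 1))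
  have hW : Wpoly (X ^ n - 1 : F[X]) = 2 ^ ω := Wpoly_eq_two_pow_card_primeFactors hf0
  have hreal : ∀ x : ℝ, (ω : ℝ) ≤ x → (Wpoly (X ^ n - 1 : F[X]) : ℝ) ≤ 2 ^ x := fun x hx => by
    rw [hW, Nat.cast_pow, Nat.cast_ofNat, ← Real.rpow_natCast]
    exact Real.rpow_le_rpow_of_exponent_le one_le_two hx
  refine ⟨hreal _ ?_, hW ▸ Nat.pow_le_pow_right two_pos (by omega), ?_, fun hndvd => hreal _ ?_⟩
  · rw [le_div_iff₀ two_pos]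
    exact_mod_cast (by omega : ω * 2 ≤ n + r)
  · rw [hW, (Nat.pow_right_injective le_rfl).eq_iff, ← Nat.gcd_eq_left_iff_dvd]
    omega
  · have hr : 2 * r ≤ n := Nat.two_mul_le_of_dvd_of_ne hn (Nat.gcd_dvd_left n (q - 1))
      (mt Nat.gcd_eq_left_iff_dvd.mp hndvd)
    rw [le_div_iff₀ four_pos]
    exact_mod_cast (by omega : ω * 4 ≤ 3 * n)

/-- Lemma 6.2, Lenstra–Schoof: Let `q` be a prime power and `n ≥ 1`.
Then `W(xⁿ − 1) ≤ 2^{(n + gcd(n, q−1))/2}`; in particular `W(xⁿ − 1) ≤ 2ⁿ`, with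
equality iff `n ∣ q − 1`, and if `n ∤ q − 1` then `W(xⁿ − 1) ≤ 2^{3n/4}`. -/
theorem stmt12 (q n : ℕ) (hq : IsPrimePow q) (hn : 0 < n)
    (F : Type) [Field F] [Fintype F] (hF : Fintype.card F = q) :
    (Wpoly ((Polynomial.X : Polynomial F) ^ n - 1) : ℝ)
        ≤ 2 ^ (((n : ℝ) + (Nat.gcd n (q - 1) : ℝ)) / 2) ∧
      Wpoly ((Polynomial.X : Polynomial F) ^ n - 1) ≤ 2 ^ n ∧
      (Wpoly ((Polynomial.X : Polynomial F) ^ n - 1) = 2 ^ n ↔ n ∣ q - 1) ∧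
      (¬ n ∣ q - 1 →
        (Wpoly ((Polynomial.X : Polynomial F) ^ n - 1) : ℝ) ≤ 2 ^ (3 * (n : ℝ) / 4)) :=
  stmt12_general q n hn F hF
end

section
/- Let q be a prime power and n a positive integer, and let W(x^n − 1) denote the number of squarefree monic divisors of x^n − 1 in F_q[x]. Then W(x^n − 1) ≤ 2^{(n+a)/b}, where: (a, b) = (0, 1) if q ≥ 29; (a, b) = (q − 1, 2) if 7 ≤ q ≤ 27; (a, b) = (14, 5) if q = 2; (a, b) = (20, 4) if q = 3; (a, b) = (12, 3) if q = 4; and (a, b) = (18, 3) if q = 5. -/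
open Polynomial UniqueFactorizationMonoid Finset

namespace UniqueFactorizationMonoid

variable {M : Type*} [CommMonoidWithZero M] [StrongNormalizationMonoid M]
  [UniqueFactorizationMonoid M] {a : M}

theorem normalizedFactors_prod_of_subset_primeFactors {T : Finset M} (hT : T ⊆ primeFactors a) :
    normalizedFactors (∏ p ∈ T, p) = T.val := by
  have hnf : ∀ p ∈ T, p ∈ normalizedFactors a := fun p hp => mem_primeFactors.mp (hT hp)
  rw [Finset.prod_eq_multiset_prod, Multiset.map_id',
    normalizedFactors_prod_eq _ fun p hp => irreducible_of_normalized_factor p (hnf p hp)]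
  exact (Multiset.map_congr rfl fun p hp => normalize_normalized_factor p (hnf p hp)).trans
    (Multiset.map_id' _)

theorem prod_primeFactors_of_squarefree {g : M} (hg : normalize g = g) (hsq : Squarefree g) :
    ∏ p ∈ primeFactors g, p = g := by
  nontriviality M
  rw [Finset.prod_eq_multiset_prod, Multiset.map_id',
    primeFactors_val_eq_normalizedFactors hsq.isRadical, prod_normalizedFactors_eq hsq.ne_zero, hg]

theorem ncard_setOf_normalized_squarefree_dvd (ha : a ≠ 0) :
    {g : M | normalize g = g ∧ Squarefree g ∧ g ∣ a}.ncard = 2 ^ #(primeFactors a) := by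
  have himage : {g : M | normalize g = g ∧ Squarefree g ∧ g ∣ a} =
      (fun T => ∏ p ∈ T, p) '' ((primeFactors a).powerset : Set (Finset M)) := by
    ext g
    simp only [Set.mem_ofPred_eq, Set.mem_image, coe_powerset, Set.mem_preimage,
      Set.mem_powerset_iff, coe_subset]
    constructor
    · rintro ⟨hg, hsq, hdvd⟩
      refine ⟨primeFactors g, fun p hp => ?_, prod_primeFactors_of_squarefree hg hsq⟩
      rw [mem_primeFactors] at hp ⊢
      exact Multiset.subset_of_le ((dvd_iff_normalizedFactors_le_normalizedFactors
        (ne_zero_of_dvd_ne_zero ha hdvd) ha).mp hdvd) hp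
    · rintro ⟨T, hT, rfl⟩
      have hdvd : ∏ p ∈ T, p ∣ a :=
        (prod_dvd_prod_of_subset T _ id hT).trans radical_dvd_self
      refine ⟨?_, ?_, hdvd⟩
      · rw [← coe_normalizeHom, map_prod]
        exact Finset.prod_congr rfl fun p hp => normalize_normalized_factor p
          (mem_primeFactors.mp (hT hp))
      · rw [squarefree_iff_nodup_normalizedFactors (ne_zero_of_dvd_ne_zero ha hdvd),
          normalizedFactors_prod_of_subset_primeFactors hT]
        exact T.nodup
  rw [himage, Set.InjOn.ncard_image, Set.ncard_coe_finset, card_powerset]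
  intro T₁ h₁ T₂ h₂ h
  rw [coe_powerset, Set.mem_preimage, Set.mem_powerset_iff, coe_subset] at h₁ h₂
  exact Finset.val_inj.mp <| by
    rw [← normalizedFactors_prod_of_subset_primeFactors h₁,
      ← normalizedFactors_prod_of_subset_primeFactors h₂]
    exact congrArg normalizedFactors h

end UniqueFactorizationMonoid

theorem mul_card_le_sum_add_sum_fiber {α : Type*} (s : Finset α) (w : α → ℕ)
    (hw : ∀ x ∈ s, 1 ≤ w x) (b : ℕ) :
    b * #s ≤ ∑ x ∈ s, w x + ∑ d ∈ Ico 1 b, (b - d) * #{x ∈ s | w x = d} := by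
  have hfiber : ∑ x ∈ s, (b - w x) ≤ ∑ d ∈ Ico 1 b, ∑ x ∈ s with w x = d, (b - w x) := by
    refine sum_le_sum_fiberwise_of_sum_fiber_nonpos fun d hd => (sum_eq_zero fun x hx => ?_).le
    rw [mem_filter] at hx
    have := hw x hx.1
    rw [mem_Ico] at hd
    omega
  calc b * #s = ∑ x ∈ s, b := by rw [sum_const, smul_eq_mul, mul_comm]
    _ ≤ ∑ x ∈ s, (w x + (b - w x)) := sum_le_sum fun x _ => by omega
    _ = ∑ x ∈ s, w x + ∑ x ∈ s, (b - w x) := sum_add_distrib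
    _ ≤ ∑ x ∈ s, w x + ∑ d ∈ Ico 1 b, (b - d) * #{x ∈ s | w x = d} := by
      refine Nat.add_le_add_left (hfiber.trans_eq (sum_congr rfl fun d _ => ?_)) _
      rw [sum_congr rfl fun x hx => by rw [(mem_filter.mp hx).2], sum_const, smul_eq_mul,
        mul_comm]

theorem two_pow_le_two_rpow_div {k m b : ℕ} (hb : 0 < b) (h : b * k ≤ m) :
    (2 : ℝ) ^ k ≤ 2 ^ ((m : ℝ) / b) := by
  rw [← Real.rpow_natCast]
  refine Real.rpow_le_rpow_of_exponent_le one_le_two ?_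
  rw [le_div_iff₀ (by positivity)]
  exact_mod_cast (mul_comm k b).trans_le h

/-- For `d = 1` the roots of `X ^ n - 1` are nonzero; for `d ≥ 2` the degree-`d` monic
irreducibles and the `q` linear ones all divide `X ^ q ^ d - X`. -/
def degreeFactorBound (q d : ℕ) : ℕ :=
  if d = 1 then q - 1 else (q ^ d - q) / d

namespace Polynomial

variable {F : Type*} [Field F]

theorem sum_natDegree_le_of_forall_dvd {T : Finset F[X]} {f : F[X]} (hf : f ≠ 0)
    (hT : ∀ p ∈ T, p.Monic ∧ Irreducible p) (hdvd : ∀ p ∈ T, p ∣ f) :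
    ∑ p ∈ T, p.natDegree ≤ f.natDegree := by
  have hcoprime : (T : Set F[X]).Pairwise IsRelPrime := by
    intro p hp p' hp' hne
    rw [(hT p hp).2.isRelPrime_iff_not_dvd]
    exact fun h => hne <| eq_of_monic_of_associated (hT p hp).1 (hT p' hp').1
      ((hT p hp).2.associated_of_dvd (hT p' hp').2 h)
  rw [← natDegree_prod _ _ fun p hp => (hT p hp).2.ne_zero]
  exact natDegree_le_of_dvd (prod_dvd_of_isRelPrime hcoprime hdvd) hf

theorem X_pow_sub_one_ne_zero {n : ℕ} (hn : 0 < n) : (X ^ n - 1 : F[X]) ≠ 0 := by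
  simpa using X_pow_sub_C_ne_zero hn (1 : F)

theorem coeff_zero_ne_zero_of_dvd_X_pow_sub_one {p : F[X]} {n : ℕ} (hn : 0 < n)
    (h : p ∣ X ^ n - 1) : p.coeff 0 ≠ 0 := by
  obtain ⟨r, hr⟩ := h
  have := congrArg (coeff · 0) hr
  intro h0
  simp [mul_coeff_zero, h0, hn.ne] at this

section Fintype

variable [Fintype F]

theorem card_le_card_sub_one_of_natDegree_eq_one {T : Finset F[X]}
    (hT : ∀ p ∈ T, p.Monic ∧ p.natDegree = 1 ∧ p.coeff 0 ≠ 0) :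
    #T ≤ Fintype.card F - 1 := by
  classical
  rw [← card_univ, ← card_erase_of_mem (mem_univ 0)]
  refine card_le_card_of_injOn (coeff · 0) (fun p hp => ?_) fun p hp p' hp' h => ?_
  · simpa using (hT p hp).2.2
  · rw [(hT p hp).1.eq_X_add_C (hT p hp).2.1, (hT p' hp').1.eq_X_add_C (hT p' hp').2.1]
    exact congrArg (X + C ·) h

theorem mul_card_add_card_le_pow_of_natDegree_eq {T : Finset F[X]} {d : ℕ} (hd : 2 ≤ d)
    (hT : ∀ p ∈ T, p.Monic ∧ Irreducible p ∧ p.natDegree = d) :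
    d * #T + Fintype.card F ≤ Fintype.card F ^ d := by
  classical
  have hq : 1 < Fintype.card F := Fintype.one_lt_card
  set L : Finset F[X] := univ.image fun c => X - C c
  have hL : ∀ p ∈ L, p.Monic ∧ Irreducible p ∧ p.natDegree = 1 := by
    simp only [L, mem_image, mem_univ, true_and, forall_exists_index, forall_apply_eq_imp_iff]
    exact fun c => ⟨monic_X_sub_C c, irreducible_X_sub_C c, natDegree_X_sub_C c⟩
  have hcardL : #L = Fintype.card F :=
    (card_image_of_injective _ fun c c' h => by simpa using h).trans (card_univ)
  have hdisj : Disjoint T L := disjoint_left.mpr fun p hpT hpL => by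
    have := (hT p hpT).2.2.symm.trans (hL p hpL).2.2
    omega
  have hTL : ∀ p ∈ T ∪ L, p.Monic ∧ Irreducible p ∧ p.natDegree ∣ d := by
    intro p hp
    rcases mem_union.mp hp with hp | hp
    · exact ⟨(hT p hp).1, (hT p hp).2.1, (hT p hp).2.2 ▸ dvd_rfl⟩
    · exact ⟨(hL p hp).1, (hL p hp).2.1, (hL p hp).2.2 ▸ one_dvd d⟩
  have hsum := sum_natDegree_le_of_forall_dvd
    (FiniteField.X_pow_card_pow_sub_X_ne_zero F (n := d) (by omega) hq)
    (fun p hp => ⟨(hTL p hp).1, (hTL p hp).2.1⟩) fun p hp => by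
      rw [← Nat.card_eq_fintype_card]
      exact (hTL p hp).2.1.natDegree_dvd_iff_dvd_X_pow_card_pow_sub_X.mp (hTL p hp).2.2
  rwa [sum_union hdisj, sum_congr rfl fun p hp => (hT p hp).2.2,
    sum_congr rfl fun p hp => (hL p hp).2.2, sum_const, sum_const, smul_eq_mul, smul_eq_mul,
    mul_one, hcardL, mul_comm, FiniteField.X_pow_card_pow_sub_X_natDegree_eq F (by omega) hq]
    at hsum

end Fintype

section primeFactors

variable [DecidableEq F]

theorem Wpoly_eq_two_pow_card_primeFactors {f : F[X]} (hf : f ≠ 0) :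
    Wpoly f = 2 ^ #(primeFactors f) := by
  rw [Wpoly, ← ncard_setOf_normalized_squarefree_dvd hf]
  congr 1
  ext g
  simp only [Set.mem_ofPred_eq, and_congr_left_iff]
  rintro ⟨hsq, -⟩
  exact ⟨Monic.normalize_eq_self, fun hg => hg ▸ monic_normalize hsq.ne_zero⟩

theorem monic_and_irreducible_of_mem_primeFactors {f p : F[X]} (hp : p ∈ primeFactors f) :
    p.Monic ∧ Irreducible p := by
  rw [mem_primeFactors] at hp
  have hirr := irreducible_of_normalized_factor p hp
  exact ⟨normalize_normalized_factor p hp ▸ monic_normalize hirr.ne_zero, hirr⟩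

variable [Fintype F] {n : ℕ}

theorem card_primeFactors_X_pow_sub_one_natDegree_eq_le (hn : 0 < n) {d : ℕ} (hd : d ≠ 0) :
    #{p ∈ primeFactors (X ^ n - 1 : F[X]) | p.natDegree = d}
      ≤ degreeFactorBound (Fintype.card F) d := by
  set T := {p ∈ primeFactors (X ^ n - 1 : F[X]) | p.natDegree = d}
  have hT (p) (hp : p ∈ T) : (p.Monic ∧ Irreducible p) ∧ p ∣ X ^ n - 1 ∧ p.natDegree = d := by
    obtain ⟨hp, hdeg⟩ := mem_filter.mp hp
    exact ⟨monic_and_irreducible_of_mem_primeFactors hp,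
      dvd_of_mem_normalizedFactors (mem_primeFactors.mp hp), hdeg⟩
  rw [degreeFactorBound]
  split_ifs with hd1
  · exact card_le_card_sub_one_of_natDegree_eq_one fun p hp => ⟨(hT p hp).1.1,
      (hT p hp).2.2.trans hd1, coeff_zero_ne_zero_of_dvd_X_pow_sub_one hn (hT p hp).2.1⟩
  · have := mul_card_add_card_le_pow_of_natDegree_eq (T := T) (by omega) fun p hp =>
      ⟨(hT p hp).1.1, (hT p hp).1.2, (hT p hp).2.2⟩
    rw [Nat.le_div_iff_mul_le (by omega), mul_comm]
    omega

theorem mul_card_primeFactors_X_pow_sub_one_le (hn : 0 < n) (b : ℕ) :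
    b * #(primeFactors (X ^ n - 1 : F[X]))
      ≤ n + ∑ d ∈ Ico 1 b, (b - d) * degreeFactorBound (Fintype.card F) d := by
  set S := primeFactors (X ^ n - 1 : F[X])
  have hS (p) (hp : p ∈ S) := monic_and_irreducible_of_mem_primeFactors hp
  have hdeg : ∑ p ∈ S, p.natDegree ≤ n :=
    (sum_natDegree_le_of_forall_dvd (X_pow_sub_one_ne_zero hn) hS
      fun p hp => dvd_of_mem_normalizedFactors (mem_primeFactors.mp hp)).trans_eq
      natDegree_X_pow_sub_C
  calc b * #S ≤ ∑ p ∈ S, p.natDegree + ∑ d ∈ Ico 1 b, (b - d) * #{p ∈ S | p.natDegree = d} :=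
        mul_card_le_sum_add_sum_fiber S _ (fun p hp => (hS p hp).2.natDegree_pos) b
    _ ≤ n + ∑ d ∈ Ico 1 b, (b - d) * degreeFactorBound (Fintype.card F) d := by
      gcongr with d hd
      exact card_primeFactors_X_pow_sub_one_natDegree_eq_le hn (by simp at hd; omega)

end primeFactors

theorem Wpoly_X_pow_sub_one_le [Fintype F] {n : ℕ} (hn : 0 < n) {a b : ℕ} (hb : 0 < b)
    (ha : ∑ d ∈ Ico 1 b, (b - d) * degreeFactorBound (Fintype.card F) d ≤ a) :
    (Wpoly (X ^ n - 1 : F[X]) : ℝ) ≤ 2 ^ (((n : ℝ) + a) / b) := by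
  classical
  rw [Wpoly_eq_two_pow_card_primeFactors (X_pow_sub_one_ne_zero hn), Nat.cast_pow, Nat.cast_ofNat]
  exact_mod_cast two_pow_le_two_rpow_div hb
    ((mul_card_primeFactors_X_pow_sub_one_le hn b).trans (Nat.add_le_add_left ha n))

end Polynomial

theorem stmt13_general (q n : ℕ) (hn : 0 < n)
    (F : Type) [Field F] [Fintype F] (hF : Fintype.card F = q) :
    (29 ≤ q →
      (Wpoly ((Polynomial.X : Polynomial F) ^ n - 1) : ℝ) ≤ 2 ^ (((n : ℝ) + 0) / 1)) ∧
    (7 ≤ q → q ≤ 27 →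
      (Wpoly ((Polynomial.X : Polynomial F) ^ n - 1) : ℝ)
        ≤ 2 ^ (((n : ℝ) + ((q : ℝ) - 1)) / 2)) ∧
    (q = 2 →
      (Wpoly ((Polynomial.X : Polynomial F) ^ n - 1) : ℝ) ≤ 2 ^ (((n : ℝ) + 14) / 5)) ∧
    (q = 3 →
      (Wpoly ((Polynomial.X : Polynomial F) ^ n - 1) : ℝ) ≤ 2 ^ (((n : ℝ) + 20) / 4)) ∧
    (q = 4 →
      (Wpoly ((Polynomial.X : Polynomial F) ^ n - 1) : ℝ) ≤ 2 ^ (((n : ℝ) + 12) / 3)) ∧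
    (q = 5 →
      (Wpoly ((Polynomial.X : Polynomial F) ^ n - 1) : ℝ) ≤ 2 ^ (((n : ℝ) + 18) / 3)) := by
  subst hF
  refine ⟨fun _ => ?_, fun _ _ => ?_, fun hq => ?_, fun hq => ?_, fun hq => ?_, fun hq => ?_⟩
  · exact_mod_cast Wpoly_X_pow_sub_one_le hn (a := 0) one_pos (by simp)
  · have h := Wpoly_X_pow_sub_one_le (F := F) hn (a := Fintype.card F - 1) two_pos
      (by simp [degreeFactorBound, sum_Ico_eq_sum_range])
    rwa [Nat.cast_sub Fintype.card_pos, Nat.cast_one] at h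
  · exact_mod_cast Wpoly_X_pow_sub_one_le hn (a := 14) (b := 5) (by norm_num) (by rw [hq]; decide)
  · exact_mod_cast Wpoly_X_pow_sub_one_le hn (a := 20) (b := 4) (by norm_num) (by rw [hq]; decide)
  · exact_mod_cast Wpoly_X_pow_sub_one_le hn (a := 12) (b := 3) (by norm_num) (by rw [hq]; decide)
  · exact_mod_cast Wpoly_X_pow_sub_one_le hn (a := 18) (b := 3) (by norm_num) (by rw [hq]; decide)

/-- Lemma 6.3, Aguirre–Neumann: Let `q` be a prime power and `n ≥ 1`.
Then `W(xⁿ − 1) ≤ 2^{(n+a)/b}` where `(a, b) = (0, 1)` for `q ≥ 29`,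
`(a, b) = (q − 1, 2)` for `7 ≤ q ≤ 27`, `(a, b) = (14, 5)` for `q = 2`,
`(a, b) = (20, 4)` for `q = 3`, `(a, b) = (12, 3)` for `q = 4`, and
`(a, b) = (18, 3)` for `q = 5`. -/
theorem stmt13 (q n : ℕ) (hq : IsPrimePow q) (hn : 0 < n)
    (F : Type) [Field F] [Fintype F] (hF : Fintype.card F = q) :
    (29 ≤ q →
      (Wpoly ((Polynomial.X : Polynomial F) ^ n - 1) : ℝ) ≤ 2 ^ (((n : ℝ) + 0) / 1)) ∧
    (7 ≤ q → q ≤ 27 →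
      (Wpoly ((Polynomial.X : Polynomial F) ^ n - 1) : ℝ)
        ≤ 2 ^ (((n : ℝ) + ((q : ℝ) - 1)) / 2)) ∧
    (q = 2 →
      (Wpoly ((Polynomial.X : Polynomial F) ^ n - 1) : ℝ) ≤ 2 ^ (((n : ℝ) + 14) / 5)) ∧
    (q = 3 →
      (Wpoly ((Polynomial.X : Polynomial F) ^ n - 1) : ℝ) ≤ 2 ^ (((n : ℝ) + 20) / 4)) ∧
    (q = 4 →
      (Wpoly ((Polynomial.X : Polynomial F) ^ n - 1) : ℝ) ≤ 2 ^ (((n : ℝ) + 12) / 3)) ∧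
    (q = 5 →
      (Wpoly ((Polynomial.X : Polynomial F) ^ n - 1) : ℝ) ≤ 2 ^ (((n : ℝ) + 18) / 3)) :=
  stmt13_general q n hn F hF
end
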